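/- Let V be a 2-dimensional subspace of a finite-dimensional inner product space E and let u, s ∈ V be unit vectors with angle ∠(u,s) < ξ_0 for some ξ_0 ∈ (0, π/2). Then there exists a rotation R of V (extended by the identity on V^⊥) with rotation angle of absolute value at most ξ_0 such that R(u) is collinear with s; consequently ‖R − Id‖ ≤ 2 sin(ξ_0/2). -/

import Mathlib

open RealInnerProductSpace

/-!
Orient the plane `V` and rotate it by the oriented angle `θ` from `u` to `σ • s`, the sign
`σ = ±1` chosen so that `⟪u, σ • s⟫ = |⟪u, s⟫|`; then `|θ|` is the unoriented angle
`arccos |⟪u, s⟫| < ξ₀`. Extended by the identity on `Vᗮ`, the map `R - Id` factors through the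
orthogonal projection onto `V`, and on `V` we have
`‖R v - v‖² = 2 (1 - cos θ) ‖v‖² ≤ 2 (1 - cos ξ₀) ‖v‖² = (2 sin (ξ₀ / 2))² ‖v‖²`.
-/

namespace Submodule

variable {𝕜 E : Type*} [RCLike 𝕜] [NormedAddCommGroup E] [InnerProductSpace 𝕜 E]
  (K : Submodule 𝕜 E) [K.HasOrthogonalProjection]

noncomputable def extendById (T : K →ₗ[𝕜] K) : E →ₗ[𝕜] E :=
  LinearMap.id + K.subtype ∘ₗ (T - LinearMap.id) ∘ₗ K.orthogonalProjectionOnto.toLinearMap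

variable {K} (T : K →ₗ[𝕜] K)

theorem extendById_apply (x : E) :
    K.extendById T x = x + ↑(T (K.orthogonalProjectionOnto x) - K.orthogonalProjectionOnto x) :=
  rfl

theorem extendById_apply_of_mem {v : E} (hv : v ∈ K) : K.extendById T v = T ⟨v, hv⟩ := by
  simp [extendById_apply, orthogonalProjectionOnto_mem_subspace_eq_self ⟨v, hv⟩]

theorem extendById_apply_of_mem_orthogonal {w : E} (hw : w ∈ Kᗮ) : K.extendById T w = w := by
  simp [extendById_apply, orthogonalProjectionOnto_eq_zero_iff.mpr hw]

theorem extendById_mem {v : E} (hv : v ∈ K) : K.extendById T v ∈ K := by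
  rw [extendById_apply_of_mem T hv]
  exact coe_mem _

theorem norm_extendById_apply (hT : ∀ y, ‖T y‖ = ‖y‖) (x : E) : ‖K.extendById T x‖ = ‖x‖ := by
  set x' := x - K.starProjection x
  have pythagoras (y : K) : ‖(y : E) + x'‖ * ‖(y : E) + x'‖ = ‖y‖ * ‖y‖ + ‖x'‖ * ‖x'‖ :=
    norm_add_sq_eq_norm_sq_add_norm_sq_of_inner_eq_zero _ _
      (sub_starProjection_mem_orthogonal (K := K) x _ y.2)
  have hRx : K.extendById T x = T (K.orthogonalProjectionOnto x) + x' := by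
    simp only [x', extendById_apply, starProjection_apply, Submodule.coe_sub]; abel
  have hx : x = K.orthogonalProjectionOnto x + x' := by
    simp only [x', starProjection_apply]; abel
  have := pythagoras (T (K.orthogonalProjectionOnto x))
  rw [← hRx, hT, ← pythagoras, ← hx] at this
  exact mul_self_inj (norm_nonneg _) (norm_nonneg _) |>.mp this

theorem norm_extendById_apply_sub_self_le {C : ℝ} (hC : 0 ≤ C) (hT : ∀ y, ‖T y - y‖ ≤ C * ‖y‖)
    (x : E) : ‖K.extendById T x - x‖ ≤ C * ‖x‖ := by
  rw [extendById_apply, add_sub_cancel_left, norm_coe]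
  exact (hT _).trans (by gcongr; exact K.norm_orthogonalProjectionOnto_apply_le x)

end Submodule

namespace Orientation

variable {F : Type*} [NormedAddCommGroup F] [InnerProductSpace ℝ F]
  [Fact (Module.finrank ℝ F = 2)] (o : Orientation ℝ F (Fin 2))

theorem inner_rotation_self (θ : Real.Angle) (x : F) :
    ⟪o.rotation θ x, x⟫ = θ.cos * ‖x‖ ^ 2 := by
  simp [rotation_apply, inner_add_left, real_inner_smul_left]

theorem norm_rotation_sub_self_sq (θ : Real.Angle) (x : F) :
    ‖o.rotation θ x - x‖ ^ 2 = 2 * (1 - θ.cos) * ‖x‖ ^ 2 := by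
  rw [norm_sub_sq_real, inner_rotation_self, LinearIsometryEquiv.norm_map]
  ring

theorem norm_rotation_sub_self_le {θ : Real.Angle} {ξ₀ : ℝ} (hθ : |θ.toReal| ≤ ξ₀)
    (hξ₀ : ξ₀ ≤ Real.pi) (x : F) :
    ‖o.rotation θ x - x‖ ≤ 2 * Real.sin (ξ₀ / 2) * ‖x‖ := by
  have hξ₀_nonneg : 0 ≤ ξ₀ := (abs_nonneg _).trans hθ
  have hcos : Real.cos ξ₀ ≤ θ.cos := by
    rw [← Real.Angle.cos_toReal, ← Real.cos_abs θ.toReal]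
    exact Real.cos_le_cos_of_nonneg_of_le_pi (abs_nonneg _) hξ₀ hθ
  have hsin : 0 ≤ Real.sin (ξ₀ / 2) :=
    Real.sin_nonneg_of_nonneg_of_le_pi (by linarith) (by linarith)
  have half_angle : 2 * (1 - Real.cos ξ₀) = (2 * Real.sin (ξ₀ / 2)) ^ 2 := by
    have := Real.cos_sq (ξ₀ / 2)
    rw [mul_div_cancel₀ _ two_ne_zero] at this
    nlinarith [Real.sin_sq_add_cos_sq (ξ₀ / 2)]
  refine le_of_pow_le_pow_left₀ two_ne_zero (by positivity) ?_
  calc ‖o.rotation θ x - x‖ ^ 2 = 2 * (1 - θ.cos) * ‖x‖ ^ 2 := o.norm_rotation_sub_self_sq θ x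
    _ ≤ 2 * (1 - Real.cos ξ₀) * ‖x‖ ^ 2 := by gcongr
    _ = (2 * Real.sin (ξ₀ / 2) * ‖x‖) ^ 2 := by rw [half_angle]; ring

end Orientation

theorem exists_abs_eq_one_inner_smul_eq_abs {E : Type*} [NormedAddCommGroup E]
    [InnerProductSpace ℝ E] (u s : E) : ∃ σ : ℝ, |σ| = 1 ∧ ⟪u, σ • s⟫ = |⟪u, s⟫| := by
  rcases le_total 0 ⟪u, s⟫ with h | h
  · exact ⟨1, abs_one, by simp [abs_of_nonneg h]⟩
  · exact ⟨-1, by simp, by simp [abs_of_nonpos h]⟩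

/-- If `u, s` are unit vectors of a 2-plane `V` in a finite-dimensional inner product space
making an angle `arccos |⟪u,s⟫| < ξ₀ < π/2`, then there is a rotation `R` of `V` (extended
by the identity on `V^⊥`) of angle of absolute value at most `ξ₀` sending `u` to a vector
collinear with `s`; consequently `‖R − Id‖ ≤ 2 sin(ξ₀/2)`. -/
theorem stmt_17 {E : Type*} [NormedAddCommGroup E] [InnerProductSpace ℝ E]
    [FiniteDimensional ℝ E]
    (V : Submodule ℝ E) (hV : Module.finrank ℝ V = 2)
    (u s : E) (hu : u ∈ V) (hs : s ∈ V) (hu1 : ‖u‖ = 1) (hs1 : ‖s‖ = 1)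
    (ξ₀ : ℝ) (hξ₀ : ξ₀ ∈ Set.Ioo 0 (Real.pi / 2))
    (hangle : Real.arccos |⟪u, s⟫| < ξ₀) :
    ∃ R : E →ₗ[ℝ] E,
      (∀ v ∈ V, R v ∈ V) ∧
      (∀ w ∈ Vᗮ, R w = w) ∧
      (∀ x : E, ‖R x‖ = ‖x‖) ∧
      (∃ ξ : ℝ, |ξ| ≤ ξ₀ ∧ ∀ v ∈ V, ⟪R v, v⟫ = Real.cos ξ * ‖v‖ ^ 2) ∧
      (∃ c : ℝ, c ≠ 0 ∧ R u = c • s) ∧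
      ‖LinearMap.toContinuousLinearMap R - ContinuousLinearMap.id ℝ E‖ ≤
        2 * Real.sin (ξ₀ / 2) := by
  obtain ⟨hξ₀_pos, hξ₀_lt⟩ := hξ₀
  have : Fact (Module.finrank ℝ V = 2) := ⟨hV⟩
  obtain ⟨σ, hσ, hus⟩ := exists_abs_eq_one_inner_smul_eq_abs u s
  let o : Orientation ℝ V (Fin 2) := (Module.finBasisOfFinrankEq ℝ V hV).orientation
  let u' : V := ⟨u, hu⟩
  let s' : V := ⟨σ • s, V.smul_mem σ hs⟩
  have hu' : ‖u'‖ = 1 := hu1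
  have hs' : ‖s'‖ = 1 := by simp [s', norm_smul, hσ, hs1]
  set θ := o.oangle u' s'
  have hθ : |θ.toReal| < ξ₀ := by
    rw [← o.angle_eq_abs_oangle_toReal (norm_ne_zero_iff.mp (by simp [hu']))
      (norm_ne_zero_iff.mp (by simp [hs'])), ← Submodule.angle_coe, InnerProductGeometry.angle]
    simpa [u', s', hus, norm_smul, hσ, hu1, hs1] using hangle
  have hξ₀_le_pi : ξ₀ ≤ Real.pi := by linarith [Real.pi_pos]
  have hsin : 0 ≤ 2 * Real.sin (ξ₀ / 2) :=
    mul_nonneg zero_le_two (Real.sin_nonneg_of_nonneg_of_le_pi (by linarith) (by linarith))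
  refine ⟨V.extendById (o.rotation θ).toLinearMap, fun v hv ↦ V.extendById_mem _ hv,
    fun w hw ↦ V.extendById_apply_of_mem_orthogonal _ hw,
    V.norm_extendById_apply _ (o.rotation θ).norm_map, ⟨θ.toReal, hθ.le, fun v hv ↦ ?_⟩,
    ⟨σ, by simp [← abs_ne_zero, hσ], ?_⟩, ?_⟩
  · rw [V.extendById_apply_of_mem _ hv, Real.Angle.cos_toReal]
    exact o.inner_rotation_self θ ⟨v, hv⟩
  · rw [V.extendById_apply_of_mem _ hu]
    exact congrArg Subtype.val ((o.rotation_oangle_eq_iff_norm_eq u' s').mpr (hu'.trans hs'.symm))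
  · refine ContinuousLinearMap.opNorm_le_bound _ hsin fun x ↦ ?_
    simpa using V.norm_extendById_apply_sub_self_le _ hsin
      (o.norm_rotation_sub_self_le hθ.le hξ₀_le_pi) x
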